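/- Let T be a bounded linear operator on a nonzero complex Hilbert space H and let f, g ∈ H with T*g = 0. If σ_p(T) = ∅, then σ_p(T + f⊗g) ⊆ σ_l(T) ∪ {⟨f,g⟩}. -/

import Mathlib

open scoped InnerProductSpace

/-- The rank one operator `f ⊗ g` given by `(f ⊗ g) h = ⟨h, g⟩ f`, where the inner
product is linear in the first argument (i.e. `⟪g, h⟫_ℂ • f` in Mathlib's convention). -/
noncomputable def rankOne {H : Type*} [NormedAddCommGroup H] [InnerProductSpace ℂ H]
    (f g : H) : H →L[ℂ] H := (innerSL ℂ g).smulRight f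

/-- The left spectrum of a bounded operator. -/
def leftSpectrum {H : Type*} [NormedAddCommGroup H] [InnerProductSpace ℂ H]
    (T : H →L[ℂ] H) : Set ℂ :=
  {l : ℂ | ¬ ∃ L : H →L[ℂ] H, L ∘L (T - l • (1 : H →L[ℂ] H)) = 1}

/-- The point spectrum (set of eigenvalues) of a bounded operator. -/
def pointSpectrum {H : Type*} [NormedAddCommGroup H] [InnerProductSpace ℂ H]
    (T : H →L[ℂ] H) : Set ℂ :=
  {l : ℂ | ∃ h : H, h ≠ 0 ∧ T h = l • h}

/-
Pairing the eigen-equation `T h + ⟨h, g⟩ f = λ h` with `g` kills `T h`, since `T* g = 0`,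
and leaves `⟨h, g⟩ ⟨f, g⟩ = λ ⟨h, g⟩`. If `⟨h, g⟩ ≠ 0` this forces `λ = ⟨f, g⟩`; otherwise
`T h = λ h`, which is impossible when `T` has no eigenvalues.
-/

section

variable {H : Type*} [NormedAddCommGroup H] [InnerProductSpace ℂ H]

theorem rankOne_apply (f g h : H) : rankOne f g h = ⟪g, h⟫_ℂ • f := rfl

theorem inner_apply_eq_zero_of_adjoint_apply_eq_zero [CompleteSpace H] {T : H →L[ℂ] H} {g : H}
    (hg : ContinuousLinearMap.adjoint T g = 0) (h : H) : ⟪g, T h⟫_ℂ = 0 := by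
  rw [← ContinuousLinearMap.adjoint_inner_left, hg, inner_zero_left]

theorem pointSpectrum_add_rankOne_subset [CompleteSpace H] {T : H →L[ℂ] H} (f : H) {g : H}
    (hg : ContinuousLinearMap.adjoint T g = 0) :
    pointSpectrum (T + rankOne f g) ⊆ pointSpectrum T ∪ {⟪g, f⟫_ℂ} := by
  rintro l ⟨h, hh, heigen⟩
  rw [add_apply, rankOne_apply] at heigen
  by_cases hgh : ⟪g, h⟫_ℂ = 0
  · left
    exact ⟨h, hh, by simpa [hgh] using heigen⟩
  · right
    have hpair : ⟪g, h⟫_ℂ * ⟪g, f⟫_ℂ = l * ⟪g, h⟫_ℂ := by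
      simpa only [inner_add_right, inner_smul_right,
        inner_apply_eq_zero_of_adjoint_apply_eq_zero hg, zero_add] using congrArg (⟪g, ·⟫_ℂ) heigen
    exact (mul_left_cancel₀ hgh (hpair.trans (mul_comm _ _))).symm

end

theorem pointSpectrum_rankOne_perturbation_subset_general
    {H : Type*} [NormedAddCommGroup H] [InnerProductSpace ℂ H] [CompleteSpace H]
    (T : H →L[ℂ] H) (f g : H)
    (hg : ContinuousLinearMap.adjoint T g = 0)
    (hp : pointSpectrum T = ∅) :
    pointSpectrum (T + rankOne f g) ⊆ leftSpectrum T ∪ {⟪g, f⟫_ℂ} :=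
  calc pointSpectrum (T + rankOne f g) ⊆ pointSpectrum T ∪ {⟪g, f⟫_ℂ} :=
        pointSpectrum_add_rankOne_subset f hg
    _ = {⟪g, f⟫_ℂ} := by rw [hp, Set.empty_union]
    _ ⊆ leftSpectrum T ∪ {⟪g, f⟫_ℂ} := Set.subset_union_right

theorem pointSpectrum_rankOne_perturbation_subset
    {H : Type*} [NormedAddCommGroup H] [InnerProductSpace ℂ H] [CompleteSpace H]
    [Nontrivial H] (T : H →L[ℂ] H) (f g : H)
    (hg : ContinuousLinearMap.adjoint T g = 0)
    (hp : pointSpectrum T = ∅) :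
    pointSpectrum (T + rankOne f g) ⊆ leftSpectrum T ∪ {⟪g, f⟫_ℂ} :=
  pointSpectrum_rankOne_perturbation_subset_general T f g hg hp
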